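/- arXiv:0707.2327 — 2 statements merged into one kernel-verified Lean document; each statement's English description precedes it below -/
import Mathlib

section
/- Let K be a totally ordered field and B a subring, and let R = {x ∈ K : ∃ z ∈ B, |x| ≤ z}. Then M = {x ∈ K : ∀ z ∈ B, z ≠ 0 → |x| < 1/|z|} is the unique maximal ideal of the valuation ring R. -/
/-!
An element `x` of `R` is a unit exactly when `x⁻¹ ∈ R`, i.e. when `1 / |z| ≤ |x|` for some nonzero
`z ∈ B`; so `M` is precisely the set of nonunits of `R`. Since `2 ∈ B`, a nonunit `a` has
`|a| < 1/2`, hence `|1 - a| > 1/2` and `1 - a` is a unit: `R` is local, and its maximal ideal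
is the set of nonunits.
-/

/-- The convex hull of a subring `B` in a linearly ordered field `K`. -/
def convexHullSubring {K : Type*} [Field K] [LinearOrder K] [IsStrictOrderedRing K] (B : Subring K) : Subring K where
  carrier := {x : K | ∃ z ∈ B, |x| ≤ z}
  zero_mem' := ⟨0, B.zero_mem, by simp⟩
  one_mem' := ⟨1, B.one_mem, by simp⟩
  add_mem' := by
    rintro a b ⟨z₁, hz₁, h₁⟩ ⟨z₂, hz₂, h₂⟩
    exact ⟨z₁ + z₂, B.add_mem hz₁ hz₂, (abs_add_le a b).trans (add_le_add h₁ h₂)⟩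
  neg_mem' := by
    rintro a ⟨z, hz, h⟩
    exact ⟨z, hz, by simpa using h⟩
  mul_mem' := by
    rintro a b ⟨z₁, hz₁, h₁⟩ ⟨z₂, hz₂, h₂⟩
    refine ⟨z₁ * z₂, B.mul_mem hz₁ hz₂, ?_⟩
    rw [abs_mul]
    exact mul_le_mul h₁ h₂ (abs_nonneg b) ((abs_nonneg a).trans h₁)

theorem Subring.isUnit_iff_inv_mem {K : Type*} [Field K] {A : Subring K} {x : A} :
    IsUnit x ↔ (x : K) ≠ 0 ∧ (x : K)⁻¹ ∈ A := by
  refine ⟨fun hx ↦ ⟨fun h ↦ ?_, Submonoid.inv_mem_of_isUnit hx⟩, fun ⟨hx0, hinv⟩ ↦ ?_⟩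
  · simpa [← Subtype.val_inj, h] using hx.ne_zero
  · exact ⟨⟨x, ⟨_, hinv⟩, Subtype.ext (mul_inv_cancel₀ hx0), Subtype.ext (inv_mul_cancel₀ hx0)⟩, rfl⟩

theorem Subring.abs_mem {K : Type*} [Ring K] [LinearOrder K] (B : Subring K) {z : K}
    (hz : z ∈ B) : |z| ∈ B := by
  rcases abs_choice z with h | h <;> rw [h]
  · exact hz
  · exact B.neg_mem hz

namespace convexHullSubring

variable {K : Type*} [Field K] [LinearOrder K] [IsStrictOrderedRing K] {B : Subring K}

theorem isUnit_iff (x : convexHullSubring B) :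
    IsUnit x ↔ ∃ z ∈ B, z ≠ 0 ∧ 1 / |z| ≤ |(x : K)| := by
  rw [Subring.isUnit_iff_inv_mem]
  constructor
  · rintro ⟨hx0, z, hzB, hz⟩
    have hzpos : 0 < z := (abs_pos.mpr (inv_ne_zero hx0)).trans_le hz
    refine ⟨z, hzB, hzpos.ne', ?_⟩
    rw [abs_of_pos hzpos, one_div, inv_le_comm₀ hzpos (abs_pos.mpr hx0), ← abs_inv]
    exact hz
  · rintro ⟨z, hzB, hz0, hz⟩
    have hzpos : 0 < |z| := abs_pos.mpr hz0
    have hxpos : 0 < |(x : K)| := (one_div_pos.mpr hzpos).trans_le hz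
    refine ⟨abs_pos.mp hxpos, |z|, B.abs_mem hzB, ?_⟩
    rw [abs_inv, inv_le_comm₀ hxpos hzpos, ← one_div]
    exact hz

theorem not_isUnit_iff (x : convexHullSubring B) :
    ¬IsUnit x ↔ ∀ z ∈ B, z ≠ 0 → |(x : K)| < 1 / |z| := by
  simp only [isUnit_iff, not_exists, not_and, not_le]

instance : IsLocalRing (convexHullSubring B) := by
  have two_mem : (2 : K) ∈ B := by exact_mod_cast natCast_mem B 2
  refine IsLocalRing.of_isUnit_or_isUnit_one_sub_self fun a ↦ or_iff_not_imp_left.mpr fun ha ↦ ?_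
  have ha2 : |(a : K)| < 1 / 2 := by
    simpa using (not_isUnit_iff a).mp ha 2 two_mem two_ne_zero
  refine (isUnit_iff _).mpr ⟨2, two_mem, two_ne_zero, ?_⟩
  calc 1 / |(2 : K)| = 1 - 1 / 2 := by norm_num
    _ ≤ 1 - |(a : K)| := by linarith
    _ ≤ |((1 - a : convexHullSubring B) : K)| := by
      simpa using abs_sub_abs_le_abs_sub 1 (a : K)

end convexHullSubring

/-- `M = {x ∈ K : ∀ z ∈ B, z ≠ 0 → |x| < 1/|z|}` is the unique maximal ideal of the
valuation ring `R = {x ∈ K : ∃ z ∈ B, |x| ≤ z}` (the convex hull of `B` in `K`). -/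
theorem convexHull_unique_maximalIdeal {K : Type*} [Field K] [LinearOrder K] [IsStrictOrderedRing K] (B : Subring K) :
    ∃ M : Ideal (convexHullSubring B),
      (∀ x : convexHullSubring B, x ∈ M ↔ ∀ z ∈ B, z ≠ 0 → |(x : K)| < 1 / |z|) ∧
      M.IsMaximal ∧ ∀ M' : Ideal (convexHullSubring B), M'.IsMaximal → M' = M :=
  ⟨IsLocalRing.maximalIdeal _, convexHullSubring.not_isUnit_iff,
    IsLocalRing.maximalIdeal.isMaximal _, fun _ ↦ IsLocalRing.eq_maximalIdeal⟩
end

section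
/- Let G be an ordered abelian group of finite rank r with chain of convex subgroups (0) = Δ_r ⊊ Δ_{r−1} ⊊ ⋯ ⊊ Δ₀ = G, and let a₁, …, a_ℓ ∈ G be scalewise ℚ-linearly independent (meaning: for each q, the elements a_i lying in Δ_q ∖ Δ_{q+1} have ℚ-linearly independent images in Δ_q/Δ_{q+1}). Let λ : G → G' be a homomorphism of ordered abelian groups. Then the following are equivalent: (i) λ(a₁), …, λ(a_ℓ) are ℚ-linearly independent; (ii) λ(a_j) ≠ 0 for all j. -/
/-- A subgroup `H` of an ordered abelian group is convex (isolated) if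
`0 ≤ a ≤ b` and `b ∈ H` imply `a ∈ H`. -/
def AddSubgroup.IsConvex {G : Type*} [AddCommGroup G] [LinearOrder G] [IsOrderedAddMonoid G] (H : AddSubgroup G) : Prop :=
  ∀ a b : G, 0 ≤ a → a ≤ b → b ∈ H → a ∈ H

/-!
The kernel of a monotone homomorphism is convex, hence equals some `Δ p`, and no `aᵢ` lies in it.
Given a relation `∑ mᵢ λ(aᵢ) = 0`, let `q` be the smallest scale carrying a nonzero coefficient.
Then `Δ p ⊆ Δ_{q+1}`, so `∑ mᵢ aᵢ ∈ Δ_{q+1}`; the terms of larger scale already lie in `Δ_{q+1}`,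
so the scale-`q` part does too, and scalewise independence kills its coefficients.
-/

theorem Fin.exists_castSucc_and_not_succ {r : ℕ} {P : Fin (r + 1) → Prop} (h0 : P 0)
    (hlast : ¬ P (Fin.last r)) : ∃ q : Fin r, P q.castSucc ∧ ¬ P q.succ := by
  by_contra! h
  exact hlast (Fin.induction h0 h (Fin.last r))

theorem AddMonoidHom.isConvex_ker {G G' : Type*} [AddCommGroup G] [LinearOrder G]
    [IsOrderedAddMonoid G] [AddCommGroup G'] [PartialOrder G'] (lam : G →+ G')
    (hmono : Monotone lam) : lam.ker.IsConvex := by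
  intro x y hx hxy hy
  rw [AddMonoidHom.mem_ker] at hy ⊢
  exact le_antisymm (hy ▸ hmono hxy) (map_zero lam ▸ hmono hx)

section Scales

variable {G : Type*} [AddCommGroup G] {r : ℕ} {Δ : Fin (r + 1) → AddSubgroup G}

theorem exists_scale_of_ne_zero (htop : Δ 0 = ⊤) (hbot : Δ (Fin.last r) = ⊥) {x : G}
    (hx : x ≠ 0) : ∃ q : Fin r, x ∈ Δ q.castSucc ∧ x ∉ Δ q.succ :=
  Fin.exists_castSucc_and_not_succ (P := (x ∈ Δ ·)) (htop ▸ AddSubgroup.mem_top x)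
    (by rwa [hbot, AddSubgroup.mem_bot])

theorem le_succ_of_mem_castSucc_of_not_mem (hΔ : Antitone Δ) {x : G} {p : Fin (r + 1)}
    {q : Fin r} (hq : x ∈ Δ q.castSucc) (hp : x ∉ Δ p) : Δ p ≤ Δ q.succ :=
  hΔ <| Fin.castSucc_lt_iff_succ_le.mp <| lt_of_not_ge fun h => hp (hΔ h hq)

variable {ι : Type*} [Fintype ι] {a : ι → G} {scale : ι → Fin r}

theorem eq_zero_of_sum_mem_of_scale_eq (hΔ : Antitone Δ)
    (hscale : ∀ (q : Fin r) (m : ι → ℤ),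
      (∀ i, m i ≠ 0 → a i ∈ Δ q.castSucc ∧ a i ∉ Δ q.succ) →
      (∑ i, m i • a i) ∈ Δ q.succ → ∀ i, m i = 0)
    (ha : ∀ i, a i ∈ Δ (scale i).castSucc ∧ a i ∉ Δ (scale i).succ)
    {m : ι → ℤ} {q : Fin r} (hq : ∀ i, m i ≠ 0 → q ≤ scale i)
    (hsum : (∑ i, m i • a i) ∈ Δ q.succ) {i : ι} (hi : scale i = q) : m i = 0 := by
  classical
  set m' : ι → ℤ := fun j => if scale j = q then m j else 0
  have hhigher : (∑ j, (m j - m' j) • a j) ∈ Δ q.succ := AddSubgroup.sum_mem _ fun j _ => by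
    by_cases hj : scale j = q ∨ m j = 0
    · rcases hj with hj | hj <;> simp [m', hj]
    · obtain ⟨hjq, hjm⟩ := not_or.mp hj
      have hlt : q < scale j := (hq j hjm).lt_of_ne' hjq
      exact AddSubgroup.zsmul_mem _ (hΔ (Fin.succ_le_castSucc_iff.mpr hlt) (ha j).1) _
  have hlevel : (∑ j, m' j • a j) ∈ Δ q.succ := by
    have hsplit : ∑ j, m' j • a j = ∑ j, m j • a j - ∑ j, (m j - m' j) • a j := by
      simp only [sub_smul, Finset.sum_sub_distrib, sub_sub_cancel]
    exact hsplit ▸ sub_mem hsum hhigher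
  have hm' := hscale q m' (fun j hj => by
    have hj : scale j = q := by by_contra h; simp [m', h] at hj
    exact hj ▸ ha j) hlevel i
  simpa [m', hi] using hm'

end Scales

theorem scalewise_indep_image_indep_iff_ne_zero_general
    {G G' : Type*} [AddCommGroup G] [LinearOrder G] [IsOrderedAddMonoid G]
    [AddCommGroup G'] [LinearOrder G'] [IsOrderedAddMonoid G']
    (r : ℕ) (Δ : Fin (r + 1) → AddSubgroup G)
    (htop : Δ 0 = ⊤) (hbot : Δ (Fin.last r) = ⊥)
    (hchain : StrictAnti Δ)
    (hall : ∀ H : AddSubgroup G, H.IsConvex → ∃ q, H = Δ q)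
    (ℓ : ℕ) (a : Fin ℓ → G) (ha : ∀ i, a i ≠ 0)
    (hscale : ∀ (q : Fin r) (m : Fin ℓ → ℤ),
      (∀ i, m i ≠ 0 → a i ∈ Δ q.castSucc ∧ a i ∉ Δ q.succ) →
      (∑ i, m i • a i) ∈ Δ q.succ → ∀ i, m i = 0)
    (lam : G →+ G') (hmono : Monotone lam) :
    (∀ m : Fin ℓ → ℤ, (∑ i, m i • lam (a i)) = 0 → ∀ i, m i = 0) ↔
      ∀ i, lam (a i) ≠ 0 := by
  refine ⟨fun hind i => (Fintype.linearIndependent_iff.mpr hind).ne_zero i, fun hne m hsum => ?_⟩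
  obtain ⟨p, hp⟩ := hall lam.ker (lam.isConvex_ker hmono)
  choose scale hlevel using fun i => exists_scale_of_ne_zero htop hbot (ha i)
  by_contra! hm
  obtain ⟨i₀, hi₀, hmin⟩ := (Finset.univ.filter (m · ≠ 0)).exists_min_image scale
    (by simpa [Finset.filter_nonempty_iff] using hm)
  have hker : (∑ i, m i • a i) ∈ Δ p := by
    rw [← hp, AddMonoidHom.mem_ker, map_sum]
    simpa only [map_zsmul] using hsum
  have hp_le : Δ p ≤ Δ (scale i₀).succ :=
    le_succ_of_mem_castSucc_of_not_mem hchain.antitone (hlevel i₀).1 fun h =>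
      hne i₀ (by rwa [← hp] at h)
  refine (Finset.mem_filter.mp hi₀).2 ?_
  exact eq_zero_of_sum_mem_of_scale_eq hchain.antitone hscale hlevel
    (fun i hi => hmin i (by simpa using hi)) (hp_le hker) rfl

/-- Let `G` be an ordered abelian group of finite rank `r`, with chain of convex subgroups
`(0) = Δ_r ⊊ ⋯ ⊊ Δ_0 = G`, and let `a₁, …, a_ℓ ∈ G` be scalewise `ℚ`-linearly independent
(for each `q`, the `aᵢ` lying in `Δ_q ∖ Δ_{q+1}` have `ℚ`-linearly independent images in
`Δ_q/Δ_{q+1}`).  Let `λ : G → G'` be an (order-preserving) homomorphism of ordered abelian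
groups.  Then `λ(a₁), …, λ(a_ℓ)` are `ℚ`-linearly independent iff they are all nonzero. -/
theorem scalewise_indep_image_indep_iff_ne_zero
    {G G' : Type*} [AddCommGroup G] [LinearOrder G] [IsOrderedAddMonoid G]
    [AddCommGroup G'] [LinearOrder G'] [IsOrderedAddMonoid G']
    (r : ℕ) (Δ : Fin (r + 1) → AddSubgroup G)
    (hconv : ∀ q, (Δ q).IsConvex)
    (htop : Δ 0 = ⊤) (hbot : Δ (Fin.last r) = ⊥)
    (hchain : StrictAnti Δ)
    (hall : ∀ H : AddSubgroup G, H.IsConvex → ∃ q, H = Δ q)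
    (ℓ : ℕ) (a : Fin ℓ → G) (ha : ∀ i, a i ≠ 0)
    (hscale : ∀ (q : Fin r) (m : Fin ℓ → ℤ),
      (∀ i, m i ≠ 0 → a i ∈ Δ q.castSucc ∧ a i ∉ Δ q.succ) →
      (∑ i, m i • a i) ∈ Δ q.succ → ∀ i, m i = 0)
    (lam : G →+ G') (hmono : Monotone lam) :
    (∀ m : Fin ℓ → ℤ, (∑ i, m i • lam (a i)) = 0 → ∀ i, m i = 0) ↔
      ∀ i, lam (a i) ≠ 0 :=
  scalewise_indep_image_indep_iff_ne_zero_general r Δ htop hbot hchain hall ℓ a ha hscale lam hmono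
end
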